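/- Let γ, N : ℝ → ℝ³ be differentiable and v : ℝ³ → ℝ be continuously differentiable with ‖Dv(x)‖ ≤ C for all x, where C ≥ 0. Assume ‖γ(s)‖ = 1, ‖N(s)‖ = 1, ⟨γ(s), N(s)⟩ = 0 and ⟨γ'(s), N(s)⟩ = 0 for all s. Define Φ(r,s) = r·γ(s) + v(r·γ(s))·N(s). Then for all r > 0 and all s, the partial derivatives ∂Φ/∂r and ∂Φ/∂s exist and satisfy |⟨∂Φ/∂r(r,s), ∂Φ/∂s(r,s)⟩| ≤ C² · r · ‖γ'(s)‖. -/

import Mathlib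

open scoped RealInnerProductSpace

/-!
Differentiating gives `∂Φ/∂r = γ + Dv(γ) N` and `∂Φ/∂s = r γ' + v N' + r Dv(γ') N`, with `Dv`
taken at `r γ`. Differentiating `‖γ‖ = 1`, `‖N‖ = 1` and `⟨γ, N⟩ = 0` shows that `γ` is orthogonal
to `γ'` and `N'`, and `N` to `N'`; together with `⟨γ, N⟩ = ⟨γ', N⟩ = 0` this kills every term of
the inner product except `r Dv(γ) Dv(γ')`, which is at most `C² r ‖γ'‖`.
-/

variable {E : Type*} [NormedAddCommGroup E] [InnerProductSpace ℝ E]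

theorem inner_add_inner_eq_zero_of_hasDerivAt_of_inner_const {f g : ℝ → E} {f' g' : E}
    {s c : ℝ} (hf : HasDerivAt f f' s) (hg : HasDerivAt g g' s) (hfg : ∀ t, ⟪f t, g t⟫ = c) :
    ⟪f s, g'⟫ + ⟪f', g s⟫ = 0 := by
  have hconst : (fun t => ⟪f t, g t⟫) = fun _ => c := funext hfg
  have hd := hf.inner ℝ hg
  rw [hconst] at hd
  exact hd.unique (hasDerivAt_const s c)

theorem inner_hasDerivAt_eq_zero_of_norm_const {f : ℝ → E} {f' : E} {s c : ℝ}
    (hf : HasDerivAt f f' s) (hnorm : ∀ t, ‖f t‖ = c) : ⟪f s, f'⟫ = 0 := by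
  have h := inner_add_inner_eq_zero_of_hasDerivAt_of_inner_const hf hf (c := c ^ 2)
    fun t => by rw [real_inner_self_eq_norm_sq, hnorm]
  rw [real_inner_comm (f s) f'] at h
  linarith

def conicalGraph (γ N : ℝ → E) (v : E → ℝ) (r s : ℝ) : E :=
  r • γ s + v (r • γ s) • N s

theorem hasDerivAt_conicalGraph_radial {γ N : ℝ → E} {v : E → ℝ} {r s : ℝ}
    (hv : DifferentiableAt ℝ v (r • γ s)) :
    HasDerivAt (fun r' => conicalGraph γ N v r' s)
      (γ s + fderiv ℝ v (r • γ s) (γ s) • N s) r := by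
  have hray : HasDerivAt (fun r' : ℝ => r' • γ s) (γ s) r := by
    simpa using (hasDerivAt_id r).smul_const (γ s)
  exact hray.add ((hv.hasFDerivAt.comp_hasDerivAt r hray).smul_const (N s))

theorem hasDerivAt_conicalGraph_angular {γ N : ℝ → E} {v : E → ℝ} {γ' N' : E} {r s : ℝ}
    (hγ : HasDerivAt γ γ' s) (hN : HasDerivAt N N' s) (hv : DifferentiableAt ℝ v (r • γ s)) :
    HasDerivAt (fun s' => conicalGraph γ N v r s')
      (r • γ' + (v (r • γ s) • N' + fderiv ℝ v (r • γ s) (r • γ') • N s)) s := by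
  have hcurve : HasDerivAt (fun s' => r • γ s') (r • γ') s := hγ.const_smul r
  exact hcurve.add ((hv.hasFDerivAt.comp_hasDerivAt s hcurve).smul hN)

theorem inner_radial_angular_eq {γ N γ' N' : E} (r a b w : ℝ) (hN : ‖N‖ = 1)
    (hγγ' : ⟪γ, γ'⟫ = 0) (hγN : ⟪γ, N⟫ = 0) (hγN' : ⟪γ, N'⟫ = 0) (hNγ' : ⟪N, γ'⟫ = 0)
    (hNN' : ⟪N, N'⟫ = 0) :
    ⟪γ + a • N, r • γ' + (w • N' + b • N)⟫ = a * b := by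
  have hNN : ⟪N, N⟫ = 1 := by rw [real_inner_self_eq_norm_sq, hN, one_pow]
  simp only [inner_add_left, inner_add_right, real_inner_smul_left, real_inner_smul_right,
    hγγ', hγN, hγN', hNγ', hNN', hNN]
  ring

theorem abs_apply_mul_apply_le_of_opNorm_le {L : E →L[ℝ] ℝ} {C : ℝ} (hL : ‖L‖ ≤ C) (x y : E) :
    |L x * L y| ≤ C ^ 2 * ‖x‖ * ‖y‖ := by
  have hC : 0 ≤ C := (norm_nonneg L).trans hL
  calc |L x * L y| = ‖L x‖ * ‖L y‖ := by rw [abs_mul, Real.norm_eq_abs, Real.norm_eq_abs]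
    _ ≤ (C * ‖x‖) * (C * ‖y‖) :=
        mul_le_mul (L.le_of_opNorm_le hL x) (L.le_of_opNorm_le hL y) (norm_nonneg _)
          (by positivity)
    _ = C ^ 2 * ‖x‖ * ‖y‖ := by ring

theorem conical_end_offdiagonal_metric_bound_general (C : ℝ)
    (γ N γ' N' : ℝ → EuclideanSpace ℝ (Fin 3))
    (hγd : ∀ s, HasDerivAt γ (γ' s) s) (hNd : ∀ s, HasDerivAt N (N' s) s)
    (v : EuclideanSpace ℝ (Fin 3) → ℝ)
    (hv : ContDiff ℝ 1 v) (hDv : ∀ x, ‖fderiv ℝ v x‖ ≤ C)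
    (hγ : ∀ s, ‖γ s‖ = 1) (hN : ∀ s, ‖N s‖ = 1)
    (hγN : ∀ s, ⟪γ s, N s⟫ = 0) (hγ'N : ∀ s, ⟪γ' s, N s⟫ = 0)
    (Φ : ℝ → ℝ → EuclideanSpace ℝ (Fin 3))
    (hΦ : ∀ r s, Φ r s = r • γ s + v (r • γ s) • N s) :
    ∀ r, 0 < r → ∀ s, ∃ Dr Ds : EuclideanSpace ℝ (Fin 3),
      HasDerivAt (fun r' => Φ r' s) Dr r ∧
      HasDerivAt (fun s' => Φ r s') Ds s ∧
      |⟪Dr, Ds⟫| ≤ C ^ 2 * r * ‖γ' s‖ := by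
  intro r hr s
  obtain rfl : Φ = conicalGraph γ N v := funext₂ hΦ
  have hvx : DifferentiableAt ℝ v (r • γ s) := hv.differentiable one_ne_zero _
  refine ⟨_, _, hasDerivAt_conicalGraph_radial hvx,
    hasDerivAt_conicalGraph_angular (hγd s) (hNd s) hvx, ?_⟩
  have hγN' : ⟪γ s, N' s⟫ = 0 := by
    have h := inner_add_inner_eq_zero_of_hasDerivAt_of_inner_const (hγd s) (hNd s) hγN
    rwa [hγ'N, add_zero] at h
  rw [inner_radial_angular_eq _ _ _ _ (hN s)
      (inner_hasDerivAt_eq_zero_of_norm_const (hγd s) hγ) (hγN s) hγN'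
      (by rw [real_inner_comm, hγ'N]) (inner_hasDerivAt_eq_zero_of_norm_const (hNd s) hN)]
  calc _ ≤ C ^ 2 * ‖γ s‖ * ‖r • γ' s‖ := abs_apply_mul_apply_le_of_opNorm_le (hDv _) _ _
    _ = C ^ 2 * r * ‖γ' s‖ := by rw [hγ, norm_smul, Real.norm_of_nonneg hr.le]; ring

/-- Off-diagonal metric bound for the conical-end parametrization
`Φ(r,s) = r·γ(s) + v(r·γ(s))·N(s)`: if `γ`, `N` are differentiable unit vector fields
with `⟨γ,N⟩ = 0` and `⟨γ',N⟩ = 0`, and `v` is C¹ with `‖Dv‖ ≤ C`, then for `r > 0`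
the partial derivatives `∂Φ/∂r`, `∂Φ/∂s` exist and
`|⟨∂Φ/∂r, ∂Φ/∂s⟩| ≤ C² · r · ‖γ'(s)‖`. -/
theorem conical_end_offdiagonal_metric_bound (C : ℝ) (hC : 0 ≤ C)
    (γ N γ' N' : ℝ → EuclideanSpace ℝ (Fin 3))
    (hγd : ∀ s, HasDerivAt γ (γ' s) s) (hNd : ∀ s, HasDerivAt N (N' s) s)
    (v : EuclideanSpace ℝ (Fin 3) → ℝ)
    (hv : ContDiff ℝ 1 v) (hDv : ∀ x, ‖fderiv ℝ v x‖ ≤ C)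
    (hγ : ∀ s, ‖γ s‖ = 1) (hN : ∀ s, ‖N s‖ = 1)
    (hγN : ∀ s, ⟪γ s, N s⟫ = 0) (hγ'N : ∀ s, ⟪γ' s, N s⟫ = 0)
    (Φ : ℝ → ℝ → EuclideanSpace ℝ (Fin 3))
    (hΦ : ∀ r s, Φ r s = r • γ s + v (r • γ s) • N s) :
    ∀ r, 0 < r → ∀ s, ∃ Dr Ds : EuclideanSpace ℝ (Fin 3),
      HasDerivAt (fun r' => Φ r' s) Dr r ∧
      HasDerivAt (fun s' => Φ r s') Ds s ∧
      |⟪Dr, Ds⟫| ≤ C ^ 2 * r * ‖γ' s‖ :=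
  conical_end_offdiagonal_metric_bound_general C γ N γ' N' hγd hNd v hv hDv hγ hN hγN hγ'N Φ hΦ
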